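/- The function f(t) = (2/√π)·√t − 2t·e^t·erfc(√t) satisfies ∫₀^∞ e^{-qt} f(t) dt = 1/(√q·(√q+1)²) for all q > 0. -/

import Mathlib

open Real MeasureTheory

/-- The complementary error function `erfc(x) = (2/√π) ∫ₓ^∞ e^{-u²} du`. -/
noncomputable def erfc (x : ℝ) : ℝ :=
  2 / Real.sqrt Real.pi * ∫ u in Set.Ioi x, Real.exp (-u ^ 2)

/-!
Unfolding `erfc`, the transform is `(2/√π) ∫ √t e^{-qt} dt` minus `4/√π` times the integral of
`t e^{(1-q)t} e^{-u²}` over the region `0 < t < u²`. Integrating over `t` first (Fubini) makes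
the inner integral elementary, and everything reduces to the Gaussian moments
`∫₀^∞ u^{2k} e^{-bu²} du`, i.e. to `Γ(3/2)` and `Γ(5/2)`. The inner antiderivative
`(e^{ca}(ca - 1) + 1)/c²`, `c = 1 - q`, degenerates at `q = 1`, which is computed separately.
-/

open Set

lemma Real.Gamma_three_halves : Gamma (3 / 2) = √π / 2 := by
  rw [show (3 / 2 : ℝ) = 1 / 2 + 1 by norm_num, Gamma_add_one (by norm_num), Gamma_one_half_eq]
  ring

lemma Real.Gamma_five_halves : Gamma (5 / 2) = 3 * √π / 4 := by
  rw [show (5 / 2 : ℝ) = 3 / 2 + 1 by norm_num, Gamma_add_one (by norm_num), Gamma_three_halves]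
  ring

lemma Real.rpow_neg_three_halves {b : ℝ} (hb : 0 < b) : b ^ (-(3 / 2) : ℝ) = 1 / (b * √b) := by
  rw [rpow_neg hb.le, show (3 / 2 : ℝ) = 1 + 1 / 2 by norm_num, rpow_add hb, rpow_one,
    ← sqrt_eq_rpow, one_div]

lemma integrableOn_sqrt_mul_exp_neg_mul {b : ℝ} (hb : 0 < b) :
    IntegrableOn (fun t => √t * exp (-b * t)) (Ioi 0) := by
  have h := integrableOn_rpow_mul_exp_neg_mul_rpow (s := 1 / 2) (by norm_num) one_pos hb
  simpa only [rpow_one, ← sqrt_eq_rpow] using h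

lemma integral_sqrt_mul_exp_neg_mul {b : ℝ} (hb : 0 < b) :
    ∫ t in Ioi 0, √t * exp (-b * t) = √π / (2 * b * √b) := by
  have h := integral_rpow_mul_exp_neg_mul_rpow (q := 1 / 2) one_pos (by norm_num) hb
  simp only [rpow_one, ← sqrt_eq_rpow] at h
  rw [h, show (-(1 / 2 + 1) / 1 : ℝ) = -(3 / 2) by norm_num,
    show ((1 / 2 + 1) / 1 : ℝ) = 3 / 2 by norm_num, Gamma_three_halves, rpow_neg_three_halves hb]
  ring

lemma integral_sq_mul_exp_neg_mul_sq {b : ℝ} (hb : 0 < b) :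
    ∫ u in Ioi 0, u ^ 2 * exp (-b * u ^ 2) = √π / (4 * b * √b) := by
  have h := integral_rpow_mul_exp_neg_mul_rpow (q := 2) two_pos (by norm_num) hb
  simp only [rpow_ofNat] at h
  rw [h, show (-(2 + 1) / 2 : ℝ) = -(3 / 2) by norm_num,
    show ((2 + 1) / 2 : ℝ) = 3 / 2 by norm_num, Gamma_three_halves, rpow_neg_three_halves hb]
  ring

lemma integral_pow_four_mul_exp_neg_sq : ∫ u in Ioi 0, u ^ 4 * exp (-u ^ 2) = 3 * √π / 8 := by
  have h := integral_rpow_mul_exp_neg_mul_rpow (q := 4) two_pos (by norm_num) one_pos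
  simp only [rpow_ofNat, neg_one_mul, one_rpow] at h
  rw [h, show ((4 + 1) / 2 : ℝ) = 5 / 2 by norm_num, Gamma_five_halves]
  ring

lemma integral_mul_exp_mul {c : ℝ} (hc : c ≠ 0) (a : ℝ) :
    ∫ t in 0..a, t * exp (c * t) = (exp (c * a) * (c * a - 1) + 1) / c ^ 2 := by
  have hderiv (x : ℝ) :
      HasDerivAt (fun t => exp (c * t) * (c * t - 1) / c ^ 2) (x * exp (c * x)) x := by
    have hlin : HasDerivAt (fun t => c * t) c x := by simpa using (hasDerivAt_id x).const_mul c
    refine (((hlin.exp).mul (hlin.sub_const 1)).div_const (c ^ 2)).congr_deriv ?_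
    field_simp
    ring
  rw [intervalIntegral.integral_eq_sub_of_hasDerivAt (fun x _ => hderiv x)
    (by apply Continuous.intervalIntegrable; fun_prop)]
  simp only [mul_zero, exp_zero, zero_sub]
  ring

def sqrtRegion : Set (ℝ × ℝ) := {p | 0 < p.1 ∧ √p.1 < p.2}

lemma measurableSet_sqrtRegion : MeasurableSet sqrtRegion :=
  (measurableSet_lt measurable_const measurable_fst).inter
    (measurableSet_lt (continuous_sqrt.measurable.comp measurable_fst) measurable_snd)

section
variable {E : Type*} [NormedAddCommGroup E] [NormedSpace ℝ E] (F : ℝ × ℝ → E)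

lemma integral_indicator_sqrtRegion_left (t : ℝ) :
    ∫ u, sqrtRegion.indicator F (t, u) =
      (Ioi 0).indicator (fun t => ∫ u in Ioi √t, F (t, u)) t := by
  by_cases ht : 0 < t
  · have hslice : (fun u => sqrtRegion.indicator F (t, u)) =
        (Ioi √t).indicator (fun u => F (t, u)) := by
      ext u
      simp [sqrtRegion, indicator, ht]
    rw [hslice, integral_indicator measurableSet_Ioi, indicator_of_mem (mem_Ioi.2 ht)]
  · simp [sqrtRegion, indicator, ht]

lemma integral_indicator_sqrtRegion_right (u : ℝ) :
    ∫ t, sqrtRegion.indicator F (t, u) =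
      (Ioi 0).indicator (fun u => ∫ t in Ioo 0 (u ^ 2), F (t, u)) u := by
  by_cases hu : 0 < u
  · have hslice : (fun t => sqrtRegion.indicator F (t, u)) =
        (Ioo 0 (u ^ 2)).indicator (fun t => F (t, u)) := by
      ext t
      simp only [indicator, sqrtRegion, mem_ofPred_eq, mem_Ioo, sqrt_lt' hu]
    rw [hslice, integral_indicator measurableSet_Ioo, indicator_of_mem (mem_Ioi.2 hu)]
  · have hempty : ∀ t, ¬ (0 < t ∧ √t < u) := fun t ht => hu ((sqrt_nonneg t).trans_lt ht.2)
    simp [sqrtRegion, indicator, hu, hempty]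

variable {F}

lemma integrableOn_integral_Ioi_sqrt (hF : IntegrableOn F sqrtRegion) :
    IntegrableOn (fun t => ∫ u in Ioi √t, F (t, u)) (Ioi 0) := by
  rw [← integrable_indicator_iff measurableSet_sqrtRegion, Measure.volume_eq_prod] at hF
  rw [← integrable_indicator_iff measurableSet_Ioi]
  simpa only [integral_indicator_sqrtRegion_left] using hF.integral_prod_left

lemma integral_Ioi_integral_Ioi_sqrt_comm (hF : IntegrableOn F sqrtRegion) :
    ∫ t in Ioi 0, ∫ u in Ioi √t, F (t, u) = ∫ u in Ioi 0, ∫ t in Ioo 0 (u ^ 2), F (t, u) := by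
  rw [← integrable_indicator_iff measurableSet_sqrtRegion, Measure.volume_eq_prod] at hF
  rw [← integral_indicator measurableSet_Ioi, ← integral_indicator measurableSet_Ioi]
  simp only [← integral_indicator_sqrtRegion_left, ← integral_indicator_sqrtRegion_right]
  exact integral_integral_swap hF
end

lemma integrableOn_sqrtRegion_mul_exp {q : ℝ} (hq : 0 < q) :
    IntegrableOn (fun p : ℝ × ℝ => p.1 * exp ((1 - q) * p.1) * exp (-p.2 ^ 2)) sqrtRegion := by
  -- `t < u²` on the region, so `(1 - q) t - u² ≤ -(q - a) t - a u²` when `a ≤ 1`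
  obtain ⟨a, ha0, haq, ha1⟩ : ∃ a : ℝ, 0 < a ∧ a < q ∧ a ≤ 1 :=
    ⟨min q 1 / 2, by positivity, by linarith [min_le_left q 1, lt_min hq one_pos],
      by linarith [min_le_right q 1]⟩
  have hdom : IntegrableOn (fun p : ℝ × ℝ => p.1 * exp (-(q - a) * p.1) * exp (-a * p.2 ^ 2))
      (Ioi 0 ×ˢ univ) := by
    rw [IntegrableOn, Measure.volume_eq_prod, ← Measure.prod_restrict, Measure.restrict_univ]
    have h := integrableOn_rpow_mul_exp_neg_mul_rpow (s := 1) (p := 1) (by norm_num) one_pos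
      (sub_pos.2 haq)
    simp only [rpow_one] at h
    exact h.mul_prod (integrable_exp_neg_mul_sq ha0)
  refine (hdom.mono_set fun p hp => ⟨hp.1, mem_univ _⟩).mono' (by fun_prop)
    (ae_restrict_of_forall_mem measurableSet_sqrtRegion fun p ⟨ht, hu⟩ => ?_)
  have htu : p.1 < p.2 ^ 2 := (sqrt_lt' ((sqrt_nonneg _).trans_lt hu)).1 hu
  rw [norm_of_nonneg (by positivity), mul_assoc, mul_assoc, ← exp_add, ← exp_add]
  exact mul_le_mul_of_nonneg_left (exp_le_exp.2 (by nlinarith)) ht.le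

lemma integral_Ioo_sq_mul_exp_mul (c u : ℝ) :
    ∫ t in Ioo 0 (u ^ 2), t * exp (c * t) * exp (-u ^ 2) =
      (∫ t in 0..u ^ 2, t * exp (c * t)) * exp (-u ^ 2) := by
  rw [integral_mul_const, intervalIntegral.integral_of_le (sq_nonneg u),
    integral_Ioc_eq_integral_Ioo]

lemma integral_Ioi_integral_Ioo_sq_mul_exp {q : ℝ} (hq : 0 < q) :
    ∫ u in Ioi 0, ∫ t in Ioo 0 (u ^ 2), t * exp ((1 - q) * t) * exp (-u ^ 2) =
      √π * (1 + 2 * √q) / (4 * q * √q * (1 + √q) ^ 2) := by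
  simp only [integral_Ioo_sq_mul_exp_mul]
  rcases eq_or_ne q 1 with rfl | hq1
  · have hpt (u : ℝ) : (∫ t in 0..u ^ 2, t * exp ((1 - 1) * t)) * exp (-u ^ 2) =
        1 / 2 * (u ^ 4 * exp (-u ^ 2)) := by
      simp only [sub_self, zero_mul, exp_zero, mul_one, integral_id]
      ring
    simp only [hpt, integral_const_mul, integral_pow_four_mul_exp_neg_sq, sqrt_one]
    ring
  have hc : 1 - q ≠ 0 := sub_ne_zero.2 (Ne.symm hq1)
  have hpt (u : ℝ) : (∫ t in 0..u ^ 2, t * exp ((1 - q) * t)) * exp (-u ^ 2) =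
      ((1 - q) * (u ^ 2 * exp (-q * u ^ 2)) - exp (-q * u ^ 2) + exp (-1 * u ^ 2)) /
        (1 - q) ^ 2 := by
    have hexp : exp ((1 - q) * u ^ 2) * exp (-u ^ 2) = exp (-q * u ^ 2) := by
      rw [← exp_add]; ring_nf
    rw [integral_mul_exp_mul hc, ← hexp]
    ring_nf
  have hM2 := integrableOn_rpow_mul_exp_neg_mul_sq hq (s := 2) (by norm_num)
  simp only [rpow_ofNat] at hM2
  have hM0 (b : ℝ) (hb : 0 < b) := (integrable_exp_neg_mul_sq hb).integrableOn (s := Ioi 0)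
  have hM20 : IntegrableOn
      (fun u => (1 - q) * (u ^ 2 * exp (-q * u ^ 2)) - exp (-q * u ^ 2)) (Ioi 0) :=
    (hM2.const_mul _).sub (hM0 q hq)
  simp only [hpt]
  rw [integral_div, integral_add hM20 (hM0 1 one_pos),
    integral_sub (hM2.const_mul _) (hM0 q hq), integral_const_mul,
    integral_sq_mul_exp_neg_mul_sq hq, integral_gaussian_Ioi, integral_gaussian_Ioi,
    div_one, sqrt_div pi_pos.le]
  obtain ⟨s, hs, rfl⟩ : ∃ s, 0 < s ∧ q = s ^ 2 := ⟨√q, sqrt_pos.2 hq, (sq_sqrt hq.le).symm⟩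
  rw [sqrt_sq hs.le]
  field_simp
  ring

/-- The function `f(t) = (2/√π)√t − 2t eᵗ erfc(√t)` has Laplace transform
`∫₀^∞ e^{-qt} f(t) dt = 1/(√q (√q+1)²)` for all `q > 0`. -/
theorem stmt13 (q : ℝ) (hq : 0 < q) :
    ∫ t in Set.Ioi (0 : ℝ),
        Real.exp (-q * t) *
          (2 / Real.sqrt Real.pi * Real.sqrt t - 2 * t * Real.exp t * erfc (Real.sqrt t))
      = 1 / (Real.sqrt q * (Real.sqrt q + 1) ^ 2) := by
  have hF := integrableOn_sqrtRegion_mul_exp hq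
  have hsplit (t : ℝ) :
      exp (-q * t) * (2 / √π * √t - 2 * t * exp t * erfc √t) =
        2 / √π * (√t * exp (-q * t)) -
          4 / √π * ∫ u in Ioi √t, t * exp ((1 - q) * t) * exp (-u ^ 2) := by
    rw [erfc, integral_const_mul, show (1 - q) * t = -q * t + t by ring, exp_add]
    ring
  simp only [hsplit]
  rw [integral_sub ((integrableOn_sqrt_mul_exp_neg_mul hq).const_mul _)
      ((integrableOn_integral_Ioi_sqrt hF).const_mul _),
    integral_const_mul, integral_const_mul, integral_sqrt_mul_exp_neg_mul hq,
    integral_Ioi_integral_Ioi_sqrt_comm hF, integral_Ioi_integral_Ioo_sq_mul_exp hq]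
  obtain ⟨s, hs, rfl⟩ : ∃ s, 0 < s ∧ q = s ^ 2 := ⟨√q, sqrt_pos.2 hq, (sq_sqrt hq.le).symm⟩
  rw [sqrt_sq hs.le]
  have hπ : 0 < √π := sqrt_pos.2 pi_pos
  field_simp
  ring
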